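/- Let G be a finite group acting on a commutative ring R by ring automorphisms. Suppose for each subgroup H ≤ G we are given a multiplicative submonoid S_H ⊆ R^H such that S_G ⊆ S_H for all H and such that each S_H is closed under the norms: for K ≤ H and a ∈ S_K, the norm ∏_{hK ∈ H/K} h·a lies in S_H. Then for every H ≤ G and a ∈ S_H there exists r ∈ R^H with r·a ∈ S_G. (Norm-closure implies torsion-extension.) -/

import Mathlib

/-!
The norm `N^G_H(a) = ∏_{gH ∈ G/H} g • a` has the factor `a` at the trivial coset. The remaining
factors form an `H`-invariant element `r`: since `a` is `H`-fixed, `gH ↦ g • a` is well defined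
and `G`-equivariant, and `H` permutes the cosets other than `H` itself. Hence
`r * a = N^G_H(a) ∈ S_G`.
-/

open Finset

section Equivariant

variable {Γ X M : Type*} [Group Γ] [MulAction Γ X] [CommMonoid M] [MulDistribMulAction Γ M]

theorem smul_prod_erase_of_smul_eq [Fintype X] [DecidableEq X] {f : X → M} {g : Γ}
    (hf : ∀ x, g • f x = f (g • x)) {x₀ : X} (hx₀ : g • x₀ = x₀) :
    g • ∏ x ∈ univ.erase x₀, f x = ∏ x ∈ univ.erase x₀, f x := by
  rw [smul_prod']
  refine prod_equiv (MulAction.toPerm g) (fun x => ?_) (fun x _ => hf x)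
  simp only [mem_erase, mem_univ, and_true, MulAction.toPerm_apply, ne_eq]
  conv_rhs => rw [← hx₀]
  exact (smul_left_cancel_iff g).not.symm

end Equivariant

section Coset

variable {Γ M : Type*} [Group Γ] [CommMonoid M] [MulDistribMulAction Γ M] {L : Subgroup Γ}
  {a : M}

theorem smul_eq_smul_of_mk_eq (ha : ∀ l ∈ L, l • a = a) {γ γ' : Γ}
    (h : (γ : Γ ⧸ L) = γ') : γ • a = γ' • a := by
  rw [← mul_inv_cancel_left γ γ', mul_smul, ha _ (QuotientGroup.eq.mp h)]

theorem exists_fixed_mul_eq_finprod_smul [Finite (Γ ⧸ L)] (ha : ∀ l ∈ L, l • a = a)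
    (s : Γ ⧸ L → Γ) (hs : ∀ x, (s x : Γ ⧸ L) = x) :
    ∃ r : M, (∀ l ∈ L, l • r = r) ∧ r * a = ∏ᶠ x, s x • a := by
  classical
  have := Fintype.ofFinite (Γ ⧸ L)
  have hequiv (γ : Γ) (x : Γ ⧸ L) : γ • (s x • a) = s (γ • x) • a := by
    rw [← mul_smul]
    refine smul_eq_smul_of_mk_eq ha ?_
    rw [hs, ← smul_eq_mul, ← MulAction.Quotient.smul_mk, hs]
  set x₀ : Γ ⧸ L := ((1 : Γ) : Γ ⧸ L)
  refine ⟨∏ x ∈ univ.erase x₀, s x • a, fun l hl => ?_, ?_⟩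
  · refine smul_prod_erase_of_smul_eq (hequiv l) ?_
    rw [MulAction.Quotient.smul_mk, smul_eq_mul, mul_one, QuotientGroup.eq, mul_one]
    exact inv_mem hl
  · have hone : s x₀ • a = a := by
      simpa using smul_eq_smul_of_mk_eq ha (hs x₀)
    rw [finprod_eq_prod_of_fintype, ← prod_erase_mul _ _ (mem_univ x₀), hone]

end Coset

theorem stmt10_general {G R : Type*} [Group G] [Finite G] [CommRing R]
    [MulSemiringAction G R]
    (S : Subgroup G → Submonoid R)
    (hfix : ∀ H : Subgroup G, ∀ a ∈ S H, ∀ h ∈ H, h • a = a)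
    (hnorm : ∀ K H : Subgroup G, K ≤ H → ∀ a ∈ S K,
      ∀ s : H ⧸ K.subgroupOf H → H,
        (∀ x : H ⧸ K.subgroupOf H, QuotientGroup.mk (s x) = x) →
        (∏ᶠ x : H ⧸ K.subgroupOf H, (s x : G) • a) ∈ S H) :
    ∀ H : Subgroup G, ∀ a ∈ S H,
      ∃ r : R, (∀ h ∈ H, h • r = r) ∧ r * a ∈ S ⊤ := by
  intro H a ha
  obtain ⟨r, hr, hra⟩ := exists_fixed_mul_eq_finprod_smul (L := H.subgroupOf ⊤)
    (fun l hl => hfix H a ha l hl) Quotient.out (fun x => Quotient.out_eq' x)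
  refine ⟨r, fun h hh => hr ⟨h, Subgroup.mem_top h⟩ hh, ?_⟩
  rw [hra]
  exact hnorm H ⊤ le_top a ha _ (fun x => Quotient.out_eq' x)

/-- Norm-closure implies torsion-extension: if the system of multiplicative
subsets `S_H ⊆ R^H` satisfies `S_G ⊆ S_H` and is closed under norms
`N^H_K(a) = ∏_{hK ∈ H/K} h • a`, then every `a ∈ S_H` divides (in `R^H`) an
element of `S_G`. -/
theorem stmt10 {G R : Type*} [Group G] [Finite G] [CommRing R]
    [MulSemiringAction G R]
    (S : Subgroup G → Submonoid R)
    (hfix : ∀ H : Subgroup G, ∀ a ∈ S H, ∀ h ∈ H, h • a = a)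
    (hres : ∀ H : Subgroup G, S ⊤ ≤ S H)
    (hnorm : ∀ K H : Subgroup G, K ≤ H → ∀ a ∈ S K,
      ∀ s : H ⧸ K.subgroupOf H → H,
        (∀ x : H ⧸ K.subgroupOf H, QuotientGroup.mk (s x) = x) →
        (∏ᶠ x : H ⧸ K.subgroupOf H, (s x : G) • a) ∈ S H) :
    ∀ H : Subgroup G, ∀ a ∈ S H,
      ∃ r : R, (∀ h ∈ H, h • r = r) ∧ r * a ∈ S ⊤ :=
  stmt10_general S hfix hnorm
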